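/- Let G = (V,E) be a finite non-bipartite simple graph with a proper 3-coloring with color classes V₁, V₂, V₃. Then for each i ∈ {1,2,3} the contraction G/V_i is non-bipartite, and writing 2ρ_i−1 for its odd girth, the fractional chromatic number of G satisfies χ^f(G) ≤ 2 + min_{i∈{1,2,3}} 1/(ρ_i − 1). Moreover, equality holds if one of the color classes consists of a single vertex. -/

import Mathlib

open Finset

/-- `C` is a vertex cover of `G`. -/
def IsVC {V : Type*} (G : SimpleGraph V) (C : Finset V) : Prop :=
  ∀ ⦃u v : V⦄, G.Adj u v → u ∈ C ∨ v ∈ C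

/-- `OPT G w` : minimum weight of a vertex cover of `G`. -/
noncomputable def OPT {V : Type*} [Fintype V] (G : SimpleGraph V) (w : V → ℝ) : ℝ :=
  sInf {t : ℝ | ∃ C : Finset V, IsVC G C ∧ t = ∑ v ∈ C, w v}

/-- `LPval G w` : optimal value of the standard vertex cover LP relaxation. -/
noncomputable def LPval {V : Type*} [Fintype V] (G : SimpleGraph V) (w : V → ℝ) : ℝ :=
  sInf {t : ℝ | ∃ x : V → ℝ, (∀ v, 0 ≤ x v) ∧ (∀ ⦃u v : V⦄, G.Adj u v → 1 ≤ x u + x v) ∧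
    t = ∑ v, w v * x v}

/-- The graph `G ∖ S` (vertices of `S` kept as isolated vertices). -/
def Gdel {V : Type*} (G : SimpleGraph V) (S : Set V) : SimpleGraph V :=
  SimpleGraph.fromRel (fun u v => G.Adj u v ∧ u ∉ S ∧ v ∉ S)

open scoped Classical in
/-- Sum of `y` over the set of edges described by `P`. -/
noncomputable def ysum {V : Type*} [Fintype V] [DecidableEq V]
    (y : Sym2 V → ℝ) (P : Sym2 V → Prop) : ℝ :=
  ∑ e : Sym2 V, if P e then y e else 0

/-- `y` is a dual certificate for `w` : a feasible dual solution with `y(δ(v)) = w v`. -/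
def IsDualCert {V : Type*} [Fintype V] [DecidableEq V] (G : SimpleGraph V)
    (w : V → ℝ) (y : Sym2 V → ℝ) : Prop :=
  (∀ e, 0 ≤ y e) ∧ (∀ e, e ∉ G.edgeSet → y e = 0) ∧
    ∀ v : V, ysum y (fun e => e ∈ G.edgeSet ∧ v ∈ e) = w v

/-- Membership in the polytope `Q^W`. -/
def memQW {V : Type*} [Fintype V] [DecidableEq V] (G : SimpleGraph V) (w : V → ℝ) : Prop :=
  (∀ v, 0 ≤ w v) ∧ (∑ v, w v) = 2 ∧ ∃ y : Sym2 V → ℝ, IsDualCert G w y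

/-- `G` has odd girth `n` : it contains an odd cycle of length `n` and no shorter one. -/
def HasOddGirth {V : Type*} (G : SimpleGraph V) (n : ℕ) : Prop :=
  Odd n ∧ (∃ (v : V) (c : G.Walk v v), c.IsCycle ∧ c.length = n) ∧
    ∀ (v : V) (c : G.Walk v v), c.IsCycle → Odd c.length → n ≤ c.length

/-- The contraction `G / S` of the vertex set `S` to a single new vertex `none`. -/
def contract {V : Type*} (G : SimpleGraph V) (S : Set V) :
    SimpleGraph (Option {v : V // v ∉ S}) :=
  SimpleGraph.fromRel (fun x y =>
    match x, y with
    | some u, some v => G.Adj u.1 v.1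
    | some u, none => ∃ s ∈ S, G.Adj u.1 s
    | none, _ => False)

/-- `I` is an independent set of `G`. -/
def IsIndep {V : Type*} (G : SimpleGraph V) (I : Finset V) : Prop :=
  ∀ ⦃u⦄, u ∈ I → ∀ ⦃v⦄, v ∈ I → ¬ G.Adj u v

/-- The fractional chromatic number of `G`. -/
noncomputable def fracChrom {V : Type*} [Fintype V] [DecidableEq V] (G : SimpleGraph V) : ℝ :=
  sInf {t : ℝ | ∃ y : Finset V → ℝ, (∀ I, 0 ≤ y I) ∧ (∀ I, ¬ IsIndep G I → y I = 0) ∧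
    (∀ v : V, 1 ≤ ∑ I : Finset V, if v ∈ I then y I else 0) ∧ t = ∑ I : Finset V, y I}

/-!
Contracting an independent set `S` is a homomorphism `G → G/S`, so the contractions inherit
non-bipartiteness. In `G/Vᵢ` the other two color classes 2-color everything but the new vertex
`v₀`, so every odd cycle passes through `v₀`. Measuring, away from `v₀`, the distance to the
neighbours of `v₀` on one side of that bipartition, and capping it according to the side, folds
`G/Vᵢ` onto the cycle `C_{2ρᵢ-1}`. The fractional chromatic number is monotone under
homomorphisms and `χ_f(C_{2k+1}) = 2 + 1/k`, which gives the bound. If `Vᵢ = {v}`, then `G/Vᵢ`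
maps back into `G`, so the shortest odd cycle of `G/Vᵢ` gives the reverse inequality.
-/

open Fin.NatCast in
theorem Fin.natCast_inj_of_lt {n : ℕ} [NeZero n] {a b : ℕ} (ha : a < n) (hb : b < n)
    (h : (a : Fin n) = (b : Fin n)) : a = b := by
  simpa [Fin.val_cast_of_lt ha, Fin.val_cast_of_lt hb] using congrArg Fin.val h

namespace SimpleGraph

theorem cycleGraph_adj_iff {n : ℕ} [NeZero n] (hn : 2 ≤ n) {u v : Fin n} :
    (cycleGraph n).Adj u v ↔ u - v = 1 ∨ v - u = 1 := by
  obtain ⟨m, rfl⟩ : ∃ m, n = m + 2 := ⟨n - 2, by omega⟩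
  rfl

theorem cycleGraph_adj_of_val_eq_succ {n : ℕ} {u v : Fin (n + 2)}
    (h : v.val = u.val + 1 ∨ (u.val = n + 1 ∧ v.val = 0)) : (cycleGraph (n + 2)).Adj u v := by
  rw [cycleGraph_adj']
  rcases h with h | ⟨hu, hv⟩
  · right
    rw [Fin.coe_sub_iff_le.mpr (by rw [Fin.le_def]; omega)]
    omega
  · right
    rw [Fin.coe_sub_iff_lt.mpr (by rw [Fin.lt_def]; omega)]
    omega

variable {V : Type*} {G : SimpleGraph V}

namespace Walk

theorem exists_isPath_or_odd_isCycle [DecidableEq V] {u v : V} (p : G.Walk u v) :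
    (∃ q : G.Walk u v, q.IsPath ∧ q.length ≤ p.length ∧ q.length % 2 = p.length % 2) ∨
      ∃ (x : V) (c : G.Walk x x), c.IsCycle ∧ Odd c.length ∧ c.length ≤ p.length := by
  induction p with
  | nil => exact Or.inl ⟨nil, IsPath.nil, le_rfl, rfl⟩
  | @cons x u v hxu p ih =>
    obtain ⟨q, hq, hle, hpar⟩ | ⟨y, c, hc, hodd, hle⟩ := ih
    swap
    · exact Or.inr ⟨y, c, hc, hodd, by rw [length_cons]; omega⟩
    by_cases hx : x ∈ q.support
    swap
    · refine Or.inl ⟨cons hxu q, hq.cons hx, by simpa using hle, ?_⟩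
      simp only [length_cons]
      omega
    have hsplit := congrArg length (q.take_spec hx)
    rw [length_append] at hsplit
    -- either the loop `x u ⋯ x` along `q` is odd, or cutting it off leaves a path of the right
    -- parity
    set r := q.takeUntil x hx
    rcases Nat.even_or_odd r.length with heven | hodd
    · have hr : r.length ≠ 0 := fun h => hxu.ne (eq_of_length_eq_zero h).symm
      refine Or.inr
        ⟨x, cons hxu r, isCycle_iff_isPath_tail_and_le_length.mpr ⟨?_, ?_⟩, ?_, ?_⟩
      · simpa using hq.takeUntil hx
      · rw [length_cons]; obtain ⟨m, hm⟩ := heven; omega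
      · simpa using heven.add_one
      · simp only [length_cons]; omega
    · refine Or.inl ⟨q.dropUntil x hx, hq.dropUntil hx, by simp only [length_cons]; omega, ?_⟩
      obtain ⟨m, hm⟩ := hodd
      simp only [length_cons]
      omega

theorem exists_odd_isCycle_length_le {v : V} (w : G.Walk v v) (hw : Odd w.length) :
    ∃ (x : V) (c : G.Walk x x), c.IsCycle ∧ Odd c.length ∧ c.length ≤ w.length := by
  classical
  refine (exists_isPath_or_odd_isCycle w).resolve_left ?_
  rintro ⟨q, hq, -, hpar⟩
  rw [length_eq_zero_iff.mpr (isPath_iff_nil.mp hq)] at hpar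
  obtain ⟨m, hm⟩ := hw
  omega

end Walk

/-- `h x` is the length of a shortest walk avoiding `v₀` from a `false` neighbour of `v₀` to
`x`, capped at `n - 1` or `n`, whichever has the parity of the color of `x`. -/
theorem exists_potential (v₀ : V) (σ : (G.deleteIncidenceSet v₀).Coloring Bool) {n : ℕ}
    (hn : Odd n) (hgirth : ∀ c : G.Walk v₀ v₀, Odd c.length → n + 2 ≤ c.length) :
    ∃ h : V → ℕ, (∀ x, h x ≤ n) ∧
      (∀ ⦃u w⦄, (G.deleteIncidenceSet v₀).Adj u w → h w = h u + 1 ∨ h u = h w + 1) ∧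
      ∀ ⦃s⦄, G.Adj v₀ s → h s = 0 ∨ h s = n := by
  obtain ⟨k, rfl⟩ := hn
  let E (x : V) : Set ℕ := {m | (∃ s, G.Adj v₀ s ∧ σ s = false ∧
      ∃ p : (G.deleteIncidenceSet v₀).Walk s x, p.length = m) ∨
    (2 * k ≤ m ∧ (m % 2 = 1 ↔ σ x = true))}
  have parity {x m} (hm : m ∈ E x) : m % 2 = 1 ↔ σ x = true := by
    rcases hm with ⟨s, -, hs, p, rfl⟩ | ⟨-, h⟩
    · rw [← Nat.odd_iff, σ.odd_length_iff_not_congr p, hs]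
      simp
    · exact h
  have step {u w m} (hm : m ∈ E u) (huw : (G.deleteIncidenceSet v₀).Adj u w) :
      m + 1 ∈ E w := by
    rcases hm with ⟨s, hs₀, hs, p, rfl⟩ | ⟨hm, h⟩
    · exact Or.inl ⟨s, hs₀, hs, p.concat huw, by simp⟩
    · refine Or.inr ⟨by omega, ?_⟩
      have := σ.valid huw
      cases hu : σ u <;> cases hw : σ w <;> simp_all <;> omega
  have hcap (x) : 2 * k + (if σ x then 1 else 0) ∈ E x :=
    Or.inr ⟨by omega, by cases σ x <;> simp⟩
  let h (x : V) : ℕ := sInf (E x)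
  have hmem (x) : h x ∈ E x := Nat.sInf_mem ⟨_, hcap x⟩
  have hle (x) : h x ≤ 2 * k + 1 := (Nat.sInf_le (hcap x)).trans (by split_ifs <;> omega)
  refine ⟨h, hle, fun u w huw => ?_, fun s hs => ?_⟩
  · have h1 : h w ≤ h u + 1 := Nat.sInf_le (step (hmem u) huw)
    have h2 : h u ≤ h w + 1 := Nat.sInf_le (step (hmem w) huw.symm)
    have h3 := parity (hmem u)
    have h4 := parity (hmem w)
    have := σ.valid huw
    cases hσu : σ u <;> cases hσw : σ w <;> simp_all <;> omega
  · cases hσ : σ s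
    · exact Or.inl (Nat.eq_zero_of_le_zero (Nat.sInf_le (Or.inl ⟨s, hs, hσ, .nil, rfl⟩)))
    refine Or.inr (le_antisymm (hle s) ?_)
    have hodd : h s % 2 = 1 := (parity (hmem s)).mpr hσ
    rcases hmem s with ⟨s₀, hs₀, -, p, hp⟩ | ⟨hge, -⟩
    · have := hgirth (.cons hs₀ ((p.mapLe (G.deleteIncidenceSet_le v₀)).concat hs.symm))
        (by simp [hp, Nat.odd_iff, hodd])
      simp only [Walk.length_cons, Walk.length_concat, Walk.length_mapLe, hp] at this
      omega
    · omega

/-- The homomorphism sends `v₀` to `0` and every other `x` to `h x + 1`. -/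
theorem nonempty_hom_cycleGraph_of_potential (v₀ : V) {n : ℕ} (h : V → ℕ)
    (hle : ∀ x, h x ≤ n)
    (hadj : ∀ ⦃u w⦄, (G.deleteIncidenceSet v₀).Adj u w → h w = h u + 1 ∨ h u = h w + 1)
    (hnbr : ∀ ⦃s⦄, G.Adj v₀ s → h s = 0 ∨ h s = n) :
    Nonempty (G →g cycleGraph (n + 2)) := by
  classical
  let ψ (x : V) : Fin (n + 2) := if x = v₀ then 0 else ⟨h x + 1, by have := hle x; omega⟩
  have hψ {x} (hx : x ≠ v₀) : (ψ x).val = h x + 1 := by simp [ψ, hx]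
  have hψ₀ : (ψ v₀).val = 0 := by simp [ψ]
  have hnbr' {s} (hs : G.Adj v₀ s) : (cycleGraph (n + 2)).Adj (ψ v₀) (ψ s) := by
    have hψs := hψ hs.ne.symm
    rcases hnbr hs with h0 | hn
    · exact cycleGraph_adj_of_val_eq_succ (Or.inl (by omega))
    · exact (cycleGraph_adj_of_val_eq_succ (Or.inr ⟨by omega, hψ₀⟩)).symm
  refine ⟨⟨ψ, fun {u w} huw => ?_⟩⟩
  by_cases hu : u = v₀
  · subst hu; exact hnbr' huw
  by_cases hw : w = v₀
  · subst hw; exact (hnbr' huw.symm).symm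
  rcases hadj (deleteIncidenceSet_adj.mpr ⟨huw, hu, hw⟩) with h1 | h1
  · exact cycleGraph_adj_of_val_eq_succ (Or.inl (by rw [hψ hu, hψ hw]; omega))
  · exact (cycleGraph_adj_of_val_eq_succ (Or.inl (by rw [hψ hu, hψ hw]; omega))).symm

theorem nonempty_hom_cycleGraph (v₀ : V) (σ : (G.deleteIncidenceSet v₀).Coloring Bool)
    {k : ℕ} (hk : 1 ≤ k)
    (hgirth : ∀ c : G.Walk v₀ v₀, Odd c.length → 2 * k + 1 ≤ c.length) :
    Nonempty (G →g cycleGraph (2 * k + 1)) := by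
  obtain ⟨m, rfl⟩ : ∃ m, k = m + 1 := ⟨k - 1, by omega⟩
  obtain ⟨h, hle, hadj, hnbr⟩ := exists_potential v₀ σ (n := 2 * m + 1) ⟨m, rfl⟩
    fun c hc => by have := hgirth c hc; omega
  exact nonempty_hom_cycleGraph_of_potential v₀ h hle hadj hnbr

end SimpleGraph

section FracColoring

variable {V : Type*} [Fintype V]

theorem IsIndep.comap {W : Type*} [DecidableEq W] {G : SimpleGraph V} {H : SimpleGraph W}
    (f : G →g H) {I : Finset W} (hI : IsIndep H I) : IsIndep G {v | f v ∈ I} := by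
  intro u hu w hw huw
  simp only [Finset.mem_filter, Finset.mem_univ, true_and] at hu hw
  exact hI hu hw (f.map_adj huw)

variable [DecidableEq V] {G : SimpleGraph V}

structure IsFracColoring (G : SimpleGraph V) (y : Finset V → ℝ) : Prop where
  nonneg : ∀ I, 0 ≤ y I
  eq_zero_of_not_isIndep : ∀ I, ¬ IsIndep G I → y I = 0
  one_le_sum : ∀ v, 1 ≤ ∑ I : Finset V, if v ∈ I then y I else 0

theorem IsFracColoring.isIndep_of_ne_zero {y : Finset V → ℝ} (hy : IsFracColoring G y)
    {I : Finset V} (hI : y I ≠ 0) : IsIndep G I :=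
  not_not.mp (mt (hy.eq_zero_of_not_isIndep I) hI)

theorem isFracColoring_singletons (G : SimpleGraph V) :
    IsFracColoring G fun I => if I.card = 1 then 1 else 0 where
  nonneg I := by positivity
  eq_zero_of_not_isIndep I hI := by
    refine if_neg fun h => hI ?_
    obtain ⟨v, rfl⟩ := Finset.card_eq_one.mp h
    intro a ha b hb
    rw [Finset.mem_singleton.mp ha, Finset.mem_singleton.mp hb]
    exact G.loopless.irrefl v
  one_le_sum v := by
    refine le_of_eq_of_le (by simp) (Finset.single_le_sum (fun I _ => ?_) (Finset.mem_univ {v}))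
    positivity

theorem le_fracChrom {b : ℝ} (h : ∀ y, IsFracColoring G y → b ≤ ∑ I, y I) :
    b ≤ fracChrom G := by
  have hs := isFracColoring_singletons G
  refine le_csInf ⟨_, _, hs.nonneg, hs.eq_zero_of_not_isIndep, hs.one_le_sum, rfl⟩ ?_
  rintro _ ⟨y, hy0, hy1, hy2, rfl⟩
  exact h y ⟨hy0, hy1, hy2⟩

theorem fracChrom_le_sum {α : Type*} [Fintype α] (φ : α → Finset V) (y : α → ℝ)
    (hy : ∀ a, 0 ≤ y a) (hφ : ∀ a, y a ≠ 0 → IsIndep G (φ a))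
    (hcover : ∀ v, 1 ≤ ∑ a, if v ∈ φ a then y a else 0) :
    fracChrom G ≤ ∑ a, y a := by
  set z : Finset V → ℝ := fun J => ∑ a with φ a = J, y a
  have sum_ite_z (p : Finset V → Prop) [DecidablePred p] :
      ∑ J, (if p J then z J else 0) = ∑ a, if p (φ a) then y a else 0 := by
    rw [← Finset.sum_fiberwise Finset.univ φ]
    refine Finset.sum_congr rfl fun J _ => ?_
    split_ifs with hJ
    · exact Finset.sum_congr rfl fun a ha => by rw [(Finset.mem_filter.mp ha).2, if_pos hJ]
    · exact (Finset.sum_eq_zero fun a ha => by rw [(Finset.mem_filter.mp ha).2, if_neg hJ]).symm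
  have hz : IsFracColoring G z :=
    { nonneg := fun J => Finset.sum_nonneg fun a _ => hy a
      eq_zero_of_not_isIndep := fun J hJ => Finset.sum_eq_zero fun a ha => by
        by_contra hya
        exact hJ ((Finset.mem_filter.mp ha).2 ▸ hφ a hya)
      one_le_sum := fun v => (hcover v).trans_eq (sum_ite_z (v ∈ ·)).symm }
  refine csInf_le ⟨0, ?_⟩ ⟨z, hz.nonneg, hz.eq_zero_of_not_isIndep, hz.one_le_sum, ?_⟩
  · rintro _ ⟨y, hy0, -, -, rfl⟩
    exact Finset.sum_nonneg fun I _ => hy0 I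
  · simpa using (sum_ite_z fun _ => True).symm

theorem fracChrom_le_of_hom {W : Type*} [Fintype W] [DecidableEq W] {H : SimpleGraph W}
    (f : G →g H) : fracChrom G ≤ fracChrom H :=
  le_fracChrom fun y hy =>
    fracChrom_le_sum (fun I => {v | f v ∈ I}) y hy.nonneg
      (fun I hI => (hy.isIndep_of_ne_zero hI).comap f)
      fun v => by simpa using hy.one_le_sum (f v)

theorem fracChrom_le_of_isIndep_cover {ι : Type*} [Fintype ι] (I : ι → Finset V)
    (hI : ∀ j, IsIndep G (I j)) {k : ℕ} (hk : 0 < k) (hcover : ∀ v, k ≤ #{j | v ∈ I j}) :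
    fracChrom G ≤ Fintype.card ι / k := by
  have hk' : (0 : ℝ) < k := by exact_mod_cast hk
  convert fracChrom_le_sum I (fun _ => (1 / k : ℝ)) (fun _ => by positivity)
    (fun j _ => hI j) fun v => ?_ using 1
  · simp [div_eq_mul_inv]
  · rw [Finset.sum_ite, Finset.sum_const_zero, add_zero, Finset.sum_const, nsmul_eq_mul,
      mul_one_div, le_div_iff₀ hk', one_mul]
    exact_mod_cast hcover v

theorem card_div_le_fracChrom {k : ℕ} (hk : 0 < k) (hI : ∀ I, IsIndep G I → #I ≤ k) :
    (Fintype.card V : ℝ) / k ≤ fracChrom G := by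
  have hk' : (0 : ℝ) < k := by exact_mod_cast hk
  refine le_fracChrom fun y hy => (div_le_iff₀' hk').mpr ?_
  calc (Fintype.card V : ℝ) = ∑ _v : V, (1 : ℝ) := by simp
    _ ≤ ∑ v, ∑ I : Finset V, if v ∈ I then y I else 0 :=
        Finset.sum_le_sum fun v _ => hy.one_le_sum v
    _ = ∑ I : Finset V, #I * y I := by
        rw [Finset.sum_comm]
        simp [Finset.sum_ite_mem]
    _ ≤ ∑ I : Finset V, k * y I := Finset.sum_le_sum fun I _ => by
        by_cases hyI : y I = 0
        · simp [hyI]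
        · exact mul_le_mul_of_nonneg_right (by exact_mod_cast hI I (hy.isIndep_of_ne_zero hyI))
            (hy.nonneg I)
    _ = k * ∑ I, y I := by rw [Finset.mul_sum]

end FracColoring

section CycleGraph

open SimpleGraph Fin.NatCast Fin.CommRing

variable {k : ℕ}

theorem card_le_of_isIndep_cycleGraph (hk : 1 ≤ k) {J : Finset (Fin (2 * k + 1))}
    (hJ : IsIndep (cycleGraph (2 * k + 1)) J) : #J ≤ k := by
  have hdisj : Disjoint J (J.map (addRightEmbedding 1)) := by
    refine Finset.disjoint_left.mpr fun u hu hu' => ?_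
    obtain ⟨v, hv, rfl⟩ := Finset.mem_map.mp hu'
    exact hJ hu hv ((cycleGraph_adj_iff (by omega)).mpr (Or.inl (by simp)))
  have := Finset.card_le_univ (J ∪ J.map (addRightEmbedding 1))
  rw [Finset.card_union_of_disjoint hdisj, Finset.card_map, Fintype.card_fin] at this
  omega

/-- The sets `{j, j + 2, …, j + 2(k - 1)}` are independent, and every vertex lies in `k` of
them. -/
theorem fracChrom_cycleGraph_le (hk : 1 ≤ k) :
    fracChrom (cycleGraph (2 * k + 1)) ≤ 2 + 1 / k := by
  let I (j : Fin (2 * k + 1)) : Finset (Fin (2 * k + 1)) :=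
    (range k).image fun a : ℕ => j + 2 * (a : Fin (2 * k + 1))
  have hI (j : Fin (2 * k + 1)) : IsIndep (cycleGraph (2 * k + 1)) (I j) := by
    intro u hu w hw huw
    simp only [I, Finset.mem_image, Finset.mem_range] at hu hw
    obtain ⟨a, ha, rfl⟩ := hu
    obtain ⟨b, hb, rfl⟩ := hw
    rcases (cycleGraph_adj_iff (by omega)).mp huw with h | h
    · have := Fin.natCast_inj_of_lt (n := 2 * k + 1) (a := 2 * a) (b := 2 * b + 1)
        (by omega) (by omega)
        (by push_cast; linear_combination h)
      omega
    · have := Fin.natCast_inj_of_lt (n := 2 * k + 1) (a := 2 * b) (b := 2 * a + 1)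
        (by omega) (by omega)
        (by push_cast; linear_combination h)
      omega
  have hcover (v : Fin (2 * k + 1)) : k ≤ #{j | v ∈ I j} := by
    have himage : ({j | v ∈ I j} : Finset (Fin (2 * k + 1))) =
        (range k).image fun a : ℕ => v - 2 * (a : Fin (2 * k + 1)) := by
      ext j
      simp only [I, Finset.mem_filter, Finset.mem_univ, true_and, Finset.mem_image]
      exact exists_congr fun a => and_congr_right fun _ => by
        constructor <;> intro h <;> linear_combination -h
    rw [himage, Finset.card_image_of_injOn, Finset.card_range]
    intro a ha b hb hab
    simp only [Finset.coe_range, Set.mem_Iio] at ha hb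
    have := Fin.natCast_inj_of_lt (n := 2 * k + 1) (a := 2 * a) (b := 2 * b) (by omega) (by omega)
      (by push_cast; linear_combination -hab)
    omega
  refine (fracChrom_le_of_isIndep_cover I hI hk hcover).trans_eq ?_
  have hk' : (k : ℝ) ≠ 0 := by positivity
  rw [Fintype.card_fin]
  push_cast
  field_simp

theorem fracChrom_cycleGraph (hk : 1 ≤ k) : fracChrom (cycleGraph (2 * k + 1)) = 2 + 1 / k := by
  refine le_antisymm (fracChrom_cycleGraph_le hk) ?_
  have h := card_div_le_fracChrom (by omega) fun J hJ => card_le_of_isIndep_cycleGraph hk hJ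
  have hk' : (k : ℝ) ≠ 0 := by positivity
  rw [Fintype.card_fin] at h
  refine le_of_eq_of_le ?_ h
  push_cast
  field_simp

end CycleGraph

theorem HasOddGirth.le_length {V : Type*} {G : SimpleGraph V} {n : ℕ} (hG : HasOddGirth G n)
    {v : V} (w : G.Walk v v) (hw : Odd w.length) : n ≤ w.length := by
  obtain ⟨x, c, hc, hodd, hle⟩ := w.exists_odd_isCycle_length_le hw
  exact (hG.2.2 x c hc hodd).trans hle

section Contract

open SimpleGraph

variable {V : Type*} (G : SimpleGraph V)

theorem contract_adj_some_some {S : Set V} {u w : {v // v ∉ S}} :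
    (contract G S).Adj (some u) (some w) ↔ G.Adj u w := by
  rw [contract, fromRel_adj]
  exact ⟨fun h => h.2.elim id fun h' => G.adj_symm h',
    fun h => ⟨by simp [Subtype.ext_iff, h.ne], Or.inl h⟩⟩

theorem contract_adj_some_none {S : Set V} {u : {v // v ∉ S}} :
    (contract G S).Adj (some u) none ↔ ∃ s ∈ S, G.Adj u s := by
  rw [contract, fromRel_adj]
  simp

theorem contract_not_adj_none_none {S : Set V} : ¬ (contract G S).Adj none none :=
  (contract G S).loopless.irrefl none

def contractHom [DecidableEq V] (S : Finset V) (hS : IsIndep G S) : G →g contract G S where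
  toFun v := if hv : v ∈ S then none else some ⟨v, hv⟩
  map_rel' {u w} huw := by
    by_cases hu : u ∈ S <;> by_cases hw : w ∈ S <;> simp only [hu, hw, dite_true, dite_false]
    · exact (hS hu hw huw).elim
    · exact ((contract_adj_some_none G).mpr ⟨u, hu, huw.symm⟩).symm
    · exact (contract_adj_some_none G).mpr ⟨w, hw, huw⟩
    · exact (contract_adj_some_some G).mpr huw

def contractSingletonHom (v : V) : contract G {v} →g G where
  toFun x := x.elim v Subtype.val
  map_rel' {x y} hxy := by
    rcases x with _ | u <;> rcases y with _ | w
    · exact absurd hxy (contract_not_adj_none_none G)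
    · obtain ⟨s, rfl, h⟩ := (contract_adj_some_none G).mp hxy.symm
      exact h.symm
    · obtain ⟨s, rfl, h⟩ := (contract_adj_some_none G).mp hxy
      exact h
    · exact (contract_adj_some_some G).mp hxy

def contractColoring (c : G.Coloring (Fin 3)) (i : Fin 3) {S : Set V}
    (hS : ∀ v, v ∈ S ↔ c v = i) : ((contract G S).deleteIncidenceSet none).Coloring Bool :=
  Coloring.mk (fun x => x.elim false fun u => decide (c u = i + 1)) fun {x y} hxy => by
    obtain ⟨hxy, hx, hy⟩ := deleteIncidenceSet_adj.mp hxy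
    obtain ⟨u, rfl⟩ := Option.ne_none_iff_exists'.mp hx
    obtain ⟨w, rfl⟩ := Option.ne_none_iff_exists'.mp hy
    have hcuw := c.valid ((contract_adj_some_some G).mp hxy)
    have hu := (hS u).not.mp u.2
    have hw := (hS w).not.mp w.2
    have key : ∀ a b i : Fin 3, a ≠ b → a ≠ i → b ≠ i →
        decide (a = i + 1) ≠ decide (b = i + 1) := by
      decide
    exact key _ _ _ hcuw hu hw

variable [Fintype V] [DecidableEq V] {G}

theorem fracChrom_le_of_hasOddGirth_contract (c : G.Coloring (Fin 3)) (i : Fin 3) {S : Finset V}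
    (hS : ∀ v, v ∈ S ↔ c v = i) {ρ : ℕ} (hρ : 2 ≤ ρ)
    (hG : HasOddGirth (contract G S) (2 * ρ - 1)) :
    fracChrom G ≤ 2 + 1 / ((ρ : ℝ) - 1) := by
  obtain ⟨k, rfl⟩ : ∃ k, ρ = k + 1 := ⟨ρ - 1, by omega⟩
  have hind : IsIndep G S := fun u hu w hw huw =>
    c.valid huw (((hS u).mp hu).trans ((hS w).mp hw).symm)
  obtain ⟨f⟩ := nonempty_hom_cycleGraph none (contractColoring G c i hS) (k := k) (by omega)
    fun w hw => by have := hG.le_length w hw; omega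
  have := fracChrom_le_of_hom (f.comp (contractHom G S hind))
  rw [fracChrom_cycleGraph (by omega)] at this
  rwa [Nat.cast_add_one, add_sub_cancel_right]

theorem le_fracChrom_of_hasOddGirth_contract_singleton (v : V) {ρ : ℕ} (hρ : 2 ≤ ρ)
    (hG : HasOddGirth (contract G {v}) (2 * ρ - 1)) :
    2 + 1 / ((ρ : ℝ) - 1) ≤ fracChrom G := by
  obtain ⟨k, rfl⟩ : ∃ k, ρ = k + 1 := ⟨ρ - 1, by omega⟩
  obtain ⟨x, c, hc, hlen⟩ := hG.2.1
  obtain ⟨e⟩ := (cycleGraph_isContained_iff (n := 2 * k + 1) (by omega)).mpr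
    ⟨x, c, hc, by omega⟩
  have := fracChrom_le_of_hom ((contractSingletonHom G v).comp e.toHom)
  rw [fracChrom_cycleGraph (by omega)] at this
  rwa [Nat.cast_add_one, add_sub_cancel_right]

end Contract

theorem exists_coloring_of_partition {V ι : Type*} {G : SimpleGraph V} (Vc : ι → Finset V)
    (hcover : ∀ v, ∃! i, v ∈ Vc i) (hind : ∀ i, IsIndep G (Vc i)) :
    ∃ c : G.Coloring ι, ∀ v i, v ∈ Vc i ↔ c v = i := by
  choose c hc huniq using hcover
  refine ⟨SimpleGraph.Coloring.mk c fun {u w} huw hcuw => hind (c u) (hc u) (hcuw ▸ hc w) huw,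
    fun v i => ⟨fun hv => (huniq v i hv).symm, fun h => h ▸ hc v⟩⟩

/-- for a non-bipartite 3-colorable graph with color classes `V₁,V₂,V₃`,
each contraction `G/Vᵢ` is non-bipartite, and the fractional chromatic number is at most
`2 + minᵢ 1/(ρᵢ - 1)`, with equality if some color class is a singleton. -/
theorem fracChrom_three_colorable {V : Type*} [Fintype V] [DecidableEq V]
    (G : SimpleGraph V) (hnb : ¬ G.Colorable 2)
    (Vc : Fin 3 → Finset V)
    (hcover : ∀ v : V, ∃! i : Fin 3, v ∈ Vc i)
    (hind : ∀ i, IsIndep G (Vc i)) :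
    (∀ i : Fin 3, ¬ (contract G ↑(Vc i)).Colorable 2) ∧
      ∀ ρ : Fin 3 → ℕ,
        (∀ i : Fin 3, 2 ≤ ρ i ∧ HasOddGirth (contract G ↑(Vc i)) (2 * ρ i - 1)) →
        (fracChrom G ≤ 2 +
            min (1 / ((ρ 0 : ℝ) - 1)) (min (1 / ((ρ 1 : ℝ) - 1)) (1 / ((ρ 2 : ℝ) - 1)))) ∧
          ((∃ i : Fin 3, (Vc i).card = 1) →
            fracChrom G = 2 +
              min (1 / ((ρ 0 : ℝ) - 1)) (min (1 / ((ρ 1 : ℝ) - 1)) (1 / ((ρ 2 : ℝ) - 1)))) := by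
  obtain ⟨c, hc⟩ := exists_coloring_of_partition Vc hcover hind
  refine ⟨fun i h2 => hnb (h2.of_hom (contractHom G (Vc i) (hind i))), fun ρ hρ => ?_⟩
  have upper (i) : fracChrom G ≤ 2 + 1 / ((ρ i : ℝ) - 1) :=
    fracChrom_le_of_hasOddGirth_contract c i (fun v => hc v i) (hρ i).1 (hρ i).2
  rw [← min_add_add_left, ← min_add_add_left]
  refine ⟨le_min (upper 0) (le_min (upper 1) (upper 2)), fun ⟨i, hi⟩ => ?_⟩
  obtain ⟨v, hv⟩ := Finset.card_eq_one.mp hi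
  have hG := (hρ i).2
  rw [hv, Finset.coe_singleton] at hG
  refine le_antisymm (le_min (upper 0) (le_min (upper 1) (upper 2)))
    ((le_fracChrom_of_hasOddGirth_contract_singleton v (hρ i).1 hG).trans' ?_)
  fin_cases i <;> simp
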